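/- arXiv:1910.13614 — 2 statements merged into one kernel-verified Lean document; each statement's English description precedes it below -/
import Mathlib

section
/- If V = I + Σ_{i=1}^{n} z_i z_i^T where each z_i ∈ R^p satisfies ‖z_i‖₂² ≤ c², then det(V) ≤ (1 + n c²/p)^p. -/
open Matrix Finset

/-!
`V` is positive semidefinite, so AM-GM on its eigenvalues gives `det V ≤ (tr V / p) ^ p`, and
`tr V = p + ∑ ‖z_i‖² ≤ p + n c²`.
-/

theorem Real.prod_le_sum_div_card_pow {ι : Type*} (s : Finset ι) {f : ι → ℝ}
    (hf : ∀ i ∈ s, 0 ≤ f i) : ∏ i ∈ s, f i ≤ ((∑ i ∈ s, f i) / #s) ^ #s := by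
  rcases s.eq_empty_or_nonempty with rfl | hs
  · simp
  have hcard : (#s : ℝ) ≠ 0 := by exact_mod_cast hs.card_pos.ne'
  have hgeom : ∏ i ∈ s, f i ^ (#s : ℝ)⁻¹ ≤ (∑ i ∈ s, f i) / #s := by
    have amgm := Real.geom_mean_le_arith_mean_weighted s (fun _ ↦ (#s : ℝ)⁻¹) f
      (fun _ _ ↦ by positivity) (by simp [hcard]) hf
    rwa [← Finset.mul_sum, inv_mul_eq_div] at amgm
  calc ∏ i ∈ s, f i
      = (∏ i ∈ s, f i ^ (#s : ℝ)⁻¹) ^ #s := by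
        rw [← Finset.prod_pow]
        refine Finset.prod_congr rfl fun i hi ↦ ?_
        rw [← Real.rpow_natCast, ← Real.rpow_mul (hf i hi), inv_mul_cancel₀ hcard, Real.rpow_one]
    _ ≤ ((∑ i ∈ s, f i) / #s) ^ #s :=
        pow_le_pow_left₀ (Finset.prod_nonneg fun i hi ↦ Real.rpow_nonneg (hf i hi) _) hgeom _

theorem Matrix.PosSemidef.det_le_trace_div_card_pow {m : Type*} [Fintype m] [DecidableEq m]
    {A : Matrix m m ℝ} (hA : A.PosSemidef) :
    A.det ≤ (A.trace / Fintype.card m) ^ Fintype.card m := by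
  have hdet : A.det = ∏ i, hA.isHermitian.eigenvalues i := by
    simpa using hA.isHermitian.det_eq_prod_eigenvalues
  have htrace : A.trace = ∑ i, hA.isHermitian.eigenvalues i := by
    simpa using hA.isHermitian.trace_eq_sum_eigenvalues
  rw [hdet, htrace]
  exact Real.prod_le_sum_div_card_pow univ fun i _ ↦ hA.eigenvalues_nonneg i

theorem Matrix.posSemidef_one_add_sum_vecMulVec_self {m ι : Type*} [Fintype m] [DecidableEq m]
    (s : Finset ι) (z : ι → m → ℝ) : (1 + ∑ i ∈ s, vecMulVec (z i) (z i)).PosSemidef :=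
  PosSemidef.one.add <| posSemidef_sum s fun i _ ↦ by
    simpa using posSemidef_vecMulVec_self_star (z i)

theorem Matrix.trace_one_add_sum_vecMulVec_self {m ι : Type*} [Fintype m] [DecidableEq m]
    (s : Finset ι) (z : ι → m → ℝ) :
    (1 + ∑ i ∈ s, vecMulVec (z i) (z i)).trace = Fintype.card m + ∑ i ∈ s, z i ⬝ᵥ z i := by
  simp [trace_add, trace_sum]

theorem det_one_add_sum_outer_le_general {p n : ℕ} (c : ℝ)
    (z : Fin n → (Fin p → ℝ)) (hz : ∀ i, z i ⬝ᵥ z i ≤ c ^ 2)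
    (V : Matrix (Fin p) (Fin p) ℝ)
    (hV : V = 1 + ∑ i : Fin n, vecMulVec (z i) (z i)) :
    V.det ≤ (1 + n * c ^ 2 / p) ^ p := by
  have hpsd : V.PosSemidef := hV ▸ posSemidef_one_add_sum_vecMulVec_self univ z
  have htrace : V.trace ≤ p + n * c ^ 2 := by
    rw [hV, trace_one_add_sum_vecMulVec_self, Fintype.card_fin]
    simpa using Finset.sum_le_sum fun i (_ : i ∈ univ) ↦ hz i
  have hmean : V.trace / p ≤ 1 + n * c ^ 2 / p := by
    rcases p.eq_zero_or_pos with rfl | hp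
    · simp
    rw [div_le_iff₀ (by exact_mod_cast hp), add_mul, one_mul, div_mul_cancel₀ _ (by positivity)]
    linarith
  calc V.det ≤ (V.trace / p) ^ p := by simpa using hpsd.det_le_trace_div_card_pow
    _ ≤ (1 + n * c ^ 2 / p) ^ p := by
      gcongr
      exact div_nonneg hpsd.trace_nonneg p.cast_nonneg

/-- If `V = I + ∑_{i=1}^n z_i z_iᵀ` with each `‖z_i‖₂² ≤ c²`, then
`det V ≤ (1 + n c² / p)^p`. -/
theorem det_one_add_sum_outer_le {p n : ℕ} (hp : 0 < p) (c : ℝ) (hc : 0 < c)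
    (z : Fin n → (Fin p → ℝ)) (hz : ∀ i, z i ⬝ᵥ z i ≤ c ^ 2)
    (V : Matrix (Fin p) (Fin p) ℝ)
    (hV : V = 1 + ∑ i : Fin n, vecMulVec (z i) (z i)) :
    V.det ≤ (1 + n * c ^ 2 / p) ^ p :=
  det_one_add_sum_outer_le_general c z hz V hV
end

section
/- With Θ, Θ_*, V, S as in the ridge regression setup, tr[(Θ_* - Θ) V (Θ_* - Θ)^T] ≤ (‖Θ_*‖_{V^{-1}} + ‖S‖_{V^{-1}})² where ‖X‖_{V^{-1}}² := tr(X^T V^{-1} X), ‖Θ_*‖_{V^{-1}} uses Θ_*^T. -/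
/-! Expanding the sums in the ridge estimate gives `Θ_*ᵀ - Θᵀ = V⁻¹ (Θ_*ᵀ - S)`, so the left-hand
side is `‖Θ_*ᵀ - S‖²_{V⁻¹}`. Factoring `V⁻¹ = Bᵀ B` turns `‖X‖_{V⁻¹}` into the Frobenius norm of
`B X`, and the bound is the triangle inequality for that norm. -/

open Matrix Finset

namespace Matrix

variable {m n : Type*} [Fintype m]

section WeightedNorm

variable [Fintype n]

attribute [local instance] frobeniusNormedAddCommGroup

theorem frobenius_norm_sq_eq_trace (X : Matrix m n ℝ) : ‖X‖ ^ 2 = trace (Xᵀ * X) := by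
  rw [frobenius_norm_def, ← Real.sqrt_eq_rpow, Real.sq_sqrt (by positivity), Finset.sum_comm]
  simp only [trace, diag_apply, mul_apply, transpose_apply, Real.rpow_two, Real.norm_eq_abs, sq,
    abs_mul_abs_self]

noncomputable def weightedNorm (M : Matrix m m ℝ) (X : Matrix m n ℝ) : ℝ :=
  √(trace (Xᵀ * M * X))

open scoped MatrixOrder

namespace PosSemidef

variable {M : Matrix m m ℝ}

theorem sq_weightedNorm (hM : M.PosSemidef) (X : Matrix m n ℝ) :
    weightedNorm M X ^ 2 = trace (Xᵀ * M * X) :=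
  Real.sq_sqrt <| by simpa using (hM.conjTranspose_mul_mul_same X).trace_nonneg

theorem weightedNorm_sub_le (hM : M.PosSemidef) (X Y : Matrix m n ℝ) :
    weightedNorm M (X - Y) ≤ weightedNorm M X + weightedNorm M Y := by
  classical
  obtain ⟨B, rfl⟩ := CStarAlgebra.nonneg_iff_eq_star_mul_self.mp hM.nonneg
  have h (Z : Matrix m n ℝ) : weightedNorm (star B * B) Z = ‖B * Z‖ := by
    have hZ : Zᵀ * (star B * B) * Z = (B * Z)ᵀ * (B * Z) := by
      simp [star_eq_conjTranspose, conjTranspose_eq_transpose_of_trivial, Matrix.mul_assoc]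
    rw [weightedNorm, hZ, ← frobenius_norm_sq_eq_trace, Real.sqrt_sq (norm_nonneg _)]
  simpa only [h, Matrix.mul_sub] using norm_sub_le (B * X) (B * Y)

end PosSemidef

end WeightedNorm

section Ridge

variable {R : Type*} [CommRing R] {ι : Type*} [Fintype ι]

theorem posDef_one_add_sum_vecMulVec_self [DecidableEq m] (z : ι → m → ℝ) :
    (1 + ∑ i, vecMulVec (z i) (z i)).PosDef :=
  PosDef.one.add_posSemidef <| posSemidef_sum _ fun i _ => by
    simpa using posSemidef_vecMulVec_self_star (z i)

theorem sum_vecMulVec_mulVec_add (A : Matrix n m R) (z : ι → m → R) (w : ι → n → R) :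
    ∑ i, vecMulVec (z i) (A *ᵥ z i + w i) =
      (∑ i, vecMulVec (z i) (z i)) * Aᵀ + ∑ i, vecMulVec (z i) (w i) := by
  simp only [vecMulVec_add, sum_add_distrib, Matrix.sum_mul, vecMulVec_mul, vecMul_transpose]

theorem nonsing_inv_mul_sub_one_mul_add [DecidableEq m] {V : Matrix m m R} (hV : IsUnit V.det)
    (A S : Matrix m n R) : V⁻¹ * ((V - 1) * A + S) = A - V⁻¹ * (A - S) := by
  rw [Matrix.mul_add, Matrix.sub_mul, Matrix.mul_sub, ← Matrix.mul_assoc, nonsing_inv_mul V hV,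
    Matrix.one_mul, Matrix.mul_sub]
  abel

theorem IsSymm.transpose_nonsing_inv_mul_mul_mul [DecidableEq m] {V : Matrix m m R}
    (hsymm : V.IsSymm) (hV : IsUnit V.det) (E : Matrix m n R) :
    (V⁻¹ * E)ᵀ * V * (V⁻¹ * E) = Eᵀ * V⁻¹ * E := by
  rw [transpose_mul, transpose_nonsing_inv, hsymm.eq, Matrix.mul_assoc _ V, ← Matrix.mul_assoc V,
    mul_nonsing_inv V hV, Matrix.one_mul]

end Ridge

end Matrix

/-- Ridge regression confidence bound:
`tr[(Θ_* - Θ) V (Θ_* - Θ)ᵀ] ≤ (‖Θ_*‖_{V⁻¹} + ‖S‖_{V⁻¹})²`, where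
`‖X‖_{V⁻¹} := sqrt (tr (Xᵀ V⁻¹ X))` (using `Θ_*ᵀ` for the first norm). -/
theorem ridge_regression_error_bound {d p n : ℕ}
    (Θstar : Matrix (Fin d) (Fin p) ℝ)
    (z : Fin n → (Fin p → ℝ)) (w : Fin n → (Fin d → ℝ))
    (V : Matrix (Fin p) (Fin p) ℝ)
    (hV : V = 1 + ∑ i : Fin n, vecMulVec (z i) (z i))
    (S : Matrix (Fin p) (Fin d) ℝ)
    (hS : S = ∑ i : Fin n, vecMulVec (z i) (w i))
    (Θ : Matrix (Fin d) (Fin p) ℝ)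
    (hΘ : Θᵀ = V⁻¹ * ∑ i : Fin n, vecMulVec (z i) (Θstar *ᵥ z i + w i)) :
    Matrix.trace ((Θstar - Θ) * V * (Θstar - Θ)ᵀ)
      ≤ (Real.sqrt (Matrix.trace (Θstar * V⁻¹ * Θstarᵀ))
          + Real.sqrt (Matrix.trace (Sᵀ * V⁻¹ * S))) ^ 2 := by
  have hVpd : V.PosDef := hV ▸ posDef_one_add_sum_vecMulVec_self z
  have hdet : IsUnit V.det := (isUnit_iff_isUnit_det V).mp hVpd.isUnit
  have hsymm : V.IsSymm := isHermitian_iff_isSymm.mp hVpd.isHermitian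
  have hVinv : V⁻¹.PosSemidef := hVpd.inv.posSemidef
  have herror : Θstar - Θ = (V⁻¹ * (Θstarᵀ - S))ᵀ := by
    rw [← transpose_transpose (Θstar - Θ), transpose_sub, hΘ, sum_vecMulVec_mulVec_add, ← hS,
      eq_sub_of_add_eq' hV.symm, nonsing_inv_mul_sub_one_mul_add hdet, sub_sub_cancel]
  calc trace ((Θstar - Θ) * V * (Θstar - Θ)ᵀ)
      = weightedNorm V⁻¹ (Θstarᵀ - S) ^ 2 := by
        rw [herror, transpose_transpose, hsymm.transpose_nonsing_inv_mul_mul_mul hdet,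
          hVinv.sq_weightedNorm]
    _ ≤ (weightedNorm V⁻¹ Θstarᵀ + weightedNorm V⁻¹ S) ^ 2 :=
        pow_le_pow_left₀ (Real.sqrt_nonneg _) (hVinv.weightedNorm_sub_le _ _) 2
    _ = _ := by simp only [weightedNorm, transpose_transpose]
end
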